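/- arXiv:1705.08737 — 6 statements merged into one kernel-verified Lean document; each statement's English description precedes it below -/
import Mathlib

section
/- For any function u in L^2(a,b) and any c,d with a ≤ c < d ≤ b, one has ∫_c^d [ (ε/2) u_x² + W(u)/ε ] dx ≥ | ∫_{u(c)}^{u(d)} √(2W(s)) ds |, where u ∈ H^1(c,d) and ε > 0. -/
open MeasureTheory

lemma young_aux (ε : ℝ) (hε : 0 < ε) (w v : ℝ) (hw : 0 ≤ w) :
    |Real.sqrt (2 * w) * v| ≤ ε / 2 * v ^ 2 + w / ε := by
  have hs : Real.sqrt (2 * w) ^ 2 = 2 * w := Real.sq_sqrt (by linarith)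
  have h1 : |Real.sqrt (2 * w) * v| = Real.sqrt (2 * w) * |v| := by
    rw [abs_mul, abs_of_nonneg (Real.sqrt_nonneg _)]
  rw [h1]
  have h2 : (ε * |v| - Real.sqrt (2 * w)) ^ 2 ≥ 0 := sq_nonneg _
  have h3 : |v| ^ 2 = v ^ 2 := sq_abs v
  have h4 : ε * (w / ε) = w := mul_div_cancel₀ w hε.ne'
  have h5 : 2 * ε * (ε / 2 * v ^ 2 + w / ε) = ε ^ 2 * v ^ 2 + 2 * w := by
    field_simp
  have key : 2 * ε * (Real.sqrt (2 * w) * |v|) ≤ 2 * ε * (ε / 2 * v ^ 2 + w / ε) := by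
    rw [h5]; nlinarith [Real.sqrt_nonneg (2 * w), abs_nonneg v]
  exact le_of_mul_le_mul_left key (by positivity)

theorem stmt0 (a b c d ε : ℝ) (hε : 0 < ε) (hac : a ≤ c) (hcd : c < d) (hdb : d ≤ b)
    (W : ℝ → ℝ) (hWc : Continuous W) (hWnn : ∀ s, 0 ≤ W s)
    (u u' : ℝ → ℝ) (hu : ∀ x ∈ Set.Icc a b, HasDerivAt u (u' x) x)
    (hint : IntervalIntegrable (fun x => ε / 2 * (u' x) ^ 2 + W (u x) / ε)
      MeasureTheory.volume c d) :
    |∫ s in (u c)..(u d), Real.sqrt (2 * W s)| ≤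
      ∫ x in c..d, (ε / 2 * (u' x) ^ 2 + W (u x) / ε) := by
  set g : ℝ → ℝ := fun s => Real.sqrt (2 * W s) with hg_def
  have hgc : Continuous g := (continuous_const.mul hWc).sqrt
  have hsub : Set.Icc c d ⊆ Set.Icc a b := Set.Icc_subset_Icc hac hdb
  have huIcc : Set.uIcc c d = Set.Icc c d := Set.uIcc_of_le hcd.le
  have hucont : ContinuousOn u (Set.Icc c d) := fun x hx =>
    ((hu x (hsub hx)).continuousAt).continuousWithinAt
  -- pointwise Young bound
  have hbound : ∀ x, |g (u x) * u' x| ≤ ε / 2 * (u' x) ^ 2 + W (u x) / ε := fun x =>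
    young_aux ε hε (W (u x)) (u' x) (hWnn _)
  -- integrability of the integrand of the substituted integral
  have hintIcc : IntegrableOn (fun x => ε / 2 * (u' x) ^ 2 + W (u x) / ε)
      (Set.Icc c d) volume := by
    rw [intervalIntegrable_iff_integrableOn_Icc_of_le hcd.le] at hint
    exact hint
  have hmeas : AEStronglyMeasurable (fun x => g (u x) * u' x)
      (volume.restrict (Set.Icc c d)) := by
    have hIoo : ∀ᵐ x ∂(volume.restrict (Set.Icc c d)), x ∈ Set.Ioo c d := by
      rw [← MeasureTheory.Measure.restrict_congr_set MeasureTheory.Ioo_ae_eq_Icc]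
      exact MeasureTheory.ae_restrict_mem measurableSet_Ioo
    have heq : (fun x => g (u x) * u' x) =ᵐ[volume.restrict (Set.Icc c d)]
        (fun x => g (u x) * deriv u x) := by
      filter_upwards [hIoo] with x hx
      rw [(hu x (hsub (Set.Ioo_subset_Icc_self hx))).deriv]
    refine AEStronglyMeasurable.congr ?_ heq.symm
    exact ((hgc.comp_continuousOn hucont).aestronglyMeasurable measurableSet_Icc).mul
      (measurable_deriv u).aestronglyMeasurable.restrict
  have hg2 : IntegrableOn (fun x => g (u x) * u' x) (Set.Icc c d) volume := by
    refine Integrable.mono' hintIcc hmeas ?_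
    filter_upwards with x
    rw [Real.norm_eq_abs]; exact hbound x
  -- change of variables
  have hchg : (∫ x in c..d, g (u x) * u' x) = ∫ s in (u c)..(u d), g s := by
    have := intervalIntegral.integral_comp_mul_deriv''' (a := c) (b := d)
      (f := u) (f' := u') (g := g)
      (by rw [huIcc]; exact hucont)
      (fun x hx => by
        rw [min_eq_left hcd.le, max_eq_right hcd.le] at hx
        exact ((hu x (hsub (Set.Ioo_subset_Icc_self hx))).hasDerivWithinAt))
      (hgc.continuousOn)
      (by
        apply hgc.continuousOn.integrableOn_compact
        rw [huIcc]
        exact isCompact_Icc.image_of_continuousOn hucont)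
      (by rw [huIcc]; exact hg2)
    simpa using this
  rw [← hchg]
  calc |∫ x in c..d, g (u x) * u' x| ≤ ∫ x in c..d, |g (u x) * u' x| :=
        intervalIntegral.abs_integral_le_integral_abs hcd.le
    _ ≤ ∫ x in c..d, (ε / 2 * (u' x) ^ 2 + W (u x) / ε) := by
        apply intervalIntegral.integral_mono_on hcd.le _ hint (fun x _ => hbound x)
        rw [intervalIntegrable_iff_integrableOn_Icc_of_le hcd.le]
        exact hg2.abs
end

section
/- Let ψ, ψ̂ : [x₀, x₁] → ℝ be C² functions with ψ'' − (μ²/ε²) ψ ≥ 0 and ψ̂'' − (μ²/ε²) ψ̂ = 0 on (x₀,x₁), ψ(x₀) = ψ̂(x₀), ψ'(x₁) = ψ̂'(x₁) = 0, and ψ ≥ 0. Then ψ(x) ≤ ψ̂(x) for all x ∈ [x₀, x₁]; in particular ψ(x₁) ≤ ψ(x₀)/cosh(μ(x₁−x₀)/ε). -/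
/-!
Write `g x = cosh (k (x - x₁))`, the solution of `g'' = k² g` with `g > 0` and `g'(x₁) = 0`.
For any `f`, the Wronskian `W = g f' - g' f` satisfies `W' = g (f'' - k² f)` and
`(f / g)' = W / g²`. If `f'' ≥ k² f` and `f'(x₁) = 0`, then `W` increases to `W(x₁) = 0`, so
`W ≤ 0` and `f / g` is antitone on `[x₀, x₁]`. Applied to `ψ - ψ̂`, which vanishes at `x₀`, this
gives `ψ ≤ ψ̂`; applied to `±ψ̂` it shows `ψ̂ / g` is constant, i.e. `ψ̂ = ψ̂(x₁) g`.
-/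

open Set Real

section CoshComparison

variable {f f' f'' : ℝ → ℝ} {a b k : ℝ}

lemma hasDerivAt_cosh_mul_sub (k b x : ℝ) :
    HasDerivAt (fun x => cosh (k * (x - b))) (k * sinh (k * (x - b))) x := by
  simpa [mul_comm] using (((hasDerivAt_id x).sub_const b).const_mul k).cosh

lemma hasDerivAt_sinh_mul_sub (k b x : ℝ) :
    HasDerivAt (fun x => sinh (k * (x - b))) (k * cosh (k * (x - b))) x := by
  simpa [mul_comm] using (((hasDerivAt_id x).sub_const b).const_mul k).sinh

lemma hasDerivAt_wronskian_cosh (hf : ∀ x, HasDerivAt f (f' x) x)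
    (hf' : ∀ x, HasDerivAt f' (f'' x) x) (x : ℝ) :
    HasDerivAt (fun x => cosh (k * (x - b)) * f' x - k * sinh (k * (x - b)) * f x)
      (cosh (k * (x - b)) * (f'' x - k ^ 2 * f x)) x :=
  (((hasDerivAt_cosh_mul_sub k b x).mul (hf' x)).sub
    (((hasDerivAt_sinh_mul_sub k b x).const_mul k).mul (hf x))).congr_deriv (by ring)

lemma hasDerivAt_div_cosh (hf : ∀ x, HasDerivAt f (f' x) x) (x : ℝ) :
    HasDerivAt (fun x => f x / cosh (k * (x - b)))
      ((cosh (k * (x - b)) * f' x - k * sinh (k * (x - b)) * f x) / cosh (k * (x - b)) ^ 2) x :=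
  ((hf x).div (hasDerivAt_cosh_mul_sub k b x) (cosh_pos _).ne').congr_deriv (by ring)

lemma antitoneOn_div_cosh (hf : ∀ x, HasDerivAt f (f' x) x) (hf' : ∀ x, HasDerivAt f' (f'' x) x)
    (hsub : ∀ x ∈ Ioo a b, 0 ≤ f'' x - k ^ 2 * f x) (hb : f' b = 0) :
    AntitoneOn (fun x => f x / cosh (k * (x - b))) (Icc a b) := by
  have hW := hasDerivAt_wronskian_cosh (k := k) (b := b) hf hf'
  have hW_mono : MonotoneOn (fun x => cosh (k * (x - b)) * f' x - k * sinh (k * (x - b)) * f x)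
      (Icc a b) :=
    monotoneOn_of_hasDerivWithinAt_nonneg (convex_Icc a b)
      (fun x _ => (hW x).continuousAt.continuousWithinAt)
      (fun x _ => (hW x).hasDerivWithinAt)
      (fun x hx => mul_nonneg (cosh_pos _).le (hsub x (by rwa [interior_Icc] at hx)))
  have hW_nonpos : ∀ x ∈ Icc a b,
      cosh (k * (x - b)) * f' x - k * sinh (k * (x - b)) * f x ≤ 0 := by
    intro x hx
    have hWb := hW_mono hx (right_mem_Icc.2 (hx.1.trans hx.2)) hx.2
    simpa [hb] using hWb
  have hQ := hasDerivAt_div_cosh (k := k) (b := b) hf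
  exact antitoneOn_of_hasDerivWithinAt_nonpos (convex_Icc a b)
    (fun x _ => (hQ x).continuousAt.continuousWithinAt)
    (fun x _ => (hQ x).hasDerivWithinAt)
    (fun x hx => div_nonpos_of_nonpos_of_nonneg
      (hW_nonpos x (interior_subset hx)) (sq_nonneg _))

lemma nonpos_on_Icc_of_subsolution (hf : ∀ x, HasDerivAt f (f' x) x)
    (hf' : ∀ x, HasDerivAt f' (f'' x) x) (hsub : ∀ x ∈ Ioo a b, 0 ≤ f'' x - k ^ 2 * f x)
    (ha : f a = 0) (hb : f' b = 0) : ∀ x ∈ Icc a b, f x ≤ 0 := by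
  intro x hx
  have hratio := antitoneOn_div_cosh hf hf' hsub hb (left_mem_Icc.2 (hx.1.trans hx.2)) hx hx.1
  dsimp only at hratio
  rw [ha, zero_div] at hratio
  exact ((div_le_iff₀ (cosh_pos _)).1 hratio).trans_eq (zero_mul _)

lemma eq_mul_cosh_on_Icc_of_solution (hf : ∀ x, HasDerivAt f (f' x) x)
    (hf' : ∀ x, HasDerivAt f' (f'' x) x) (hsol : ∀ x ∈ Ioo a b, f'' x - k ^ 2 * f x = 0)
    (hb : f' b = 0) : ∀ x ∈ Icc a b, f x = f b * cosh (k * (x - b)) := by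
  intro x hx
  have hbI : b ∈ Icc a b := right_mem_Icc.2 (hx.1.trans hx.2)
  have hle := antitoneOn_div_cosh hf hf' (fun y hy => (hsol y hy).ge) hb hx hbI hx.2
  have hge := antitoneOn_div_cosh (f := fun y => -f y) (k := k)
    (fun y => (hf y).neg) (fun y => (hf' y).neg)
    (fun y hy => by linarith [hsol y hy]) (by simp [hb]) hx hbI hx.2
  have hx_eq : f x / cosh (k * (x - b)) = f b := by
    dsimp only at hle hge
    simp only [sub_self, mul_zero, cosh_zero, div_one, neg_div] at hle hge
    linarith
  rw [← hx_eq, div_mul_cancel₀ _ (cosh_pos _).ne']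

end CoshComparison

theorem stmt2_general (x₀ x₁ μ ε : ℝ) (hx : x₀ < x₁)
    (ψ ψ' ψ'' ψh ψh' ψh'' : ℝ → ℝ)
    (hψ1 : ∀ x, HasDerivAt ψ (ψ' x) x) (hψ2 : ∀ x, HasDerivAt ψ' (ψ'' x) x)
    (hψh1 : ∀ x, HasDerivAt ψh (ψh' x) x) (hψh2 : ∀ x, HasDerivAt ψh' (ψh'' x) x)
    (hsub : ∀ x ∈ Set.Ioo x₀ x₁, 0 ≤ ψ'' x - μ ^ 2 / ε ^ 2 * ψ x)
    (hsol : ∀ x ∈ Set.Ioo x₀ x₁, ψh'' x - μ ^ 2 / ε ^ 2 * ψh x = 0)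
    (hbc0 : ψ x₀ = ψh x₀) (hbc1 : ψ' x₁ = 0) (hbc1' : ψh' x₁ = 0) :
    (∀ x ∈ Set.Icc x₀ x₁, ψ x ≤ ψh x) ∧
      ψ x₁ ≤ ψ x₀ / Real.cosh (μ * (x₁ - x₀) / ε) := by
  rw [← div_pow] at hsub hsol
  have hle : ∀ x ∈ Icc x₀ x₁, ψ x ≤ ψh x := fun x hx' => sub_nonpos.1 <|
    nonpos_on_Icc_of_subsolution (f := fun x => ψ x - ψh x) (k := μ / ε)
      (fun x => (hψ1 x).sub (hψh1 x)) (fun x => (hψ2 x).sub (hψh2 x))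
      (fun x hx' => by linarith [hsub x hx', hsol x hx']) (sub_eq_zero.2 hbc0)
      (by rw [hbc1, hbc1', sub_zero]) x hx'
  refine ⟨hle, ?_⟩
  have hψh_x₀ : ψh x₀ = ψh x₁ * cosh (μ * (x₁ - x₀) / ε) := by
    rw [eq_mul_cosh_on_Icc_of_solution hψh1 hψh2 hsol hbc1' x₀ (left_mem_Icc.2 hx.le), ← cosh_neg]
    ring_nf
  rw [hbc0, hψh_x₀, mul_div_cancel_right₀ _ (cosh_pos _).ne']
  exact hle x₁ (right_mem_Icc.2 hx.le)

theorem stmt2 (x₀ x₁ μ ε : ℝ) (hx : x₀ < x₁) (hμ : 0 < μ) (hε : 0 < ε)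
    (ψ ψ' ψ'' ψh ψh' ψh'' : ℝ → ℝ)
    (hψ1 : ∀ x, HasDerivAt ψ (ψ' x) x) (hψ2 : ∀ x, HasDerivAt ψ' (ψ'' x) x)
    (hψh1 : ∀ x, HasDerivAt ψh (ψh' x) x) (hψh2 : ∀ x, HasDerivAt ψh' (ψh'' x) x)
    (hsub : ∀ x ∈ Set.Ioo x₀ x₁, 0 ≤ ψ'' x - μ ^ 2 / ε ^ 2 * ψ x)
    (hsol : ∀ x ∈ Set.Ioo x₀ x₁, ψh'' x - μ ^ 2 / ε ^ 2 * ψh x = 0)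
    (hbc0 : ψ x₀ = ψh x₀) (hbc1 : ψ' x₁ = 0) (hbc1' : ψh' x₁ = 0)
    (hpos : ∀ x ∈ Set.Icc x₀ x₁, 0 ≤ ψ x) :
    (∀ x ∈ Set.Icc x₀ x₁, ψ x ≤ ψh x) ∧
      ψ x₁ ≤ ψ x₀ / Real.cosh (μ * (x₁ - x₀) / ε) :=
  stmt2_general x₀ x₁ μ ε hx ψ ψ' ψ'' ψh ψh' ψh'' hψ1 hψ2 hψh1 hψh2 hsub hsol hbc0 hbc1 hbc1'
end

section
/- Let u, v ∈ L^1(a,b) with v piecewise constant, and let ū, v̄ denote primitives (ū(x) = ∫_a^x u, v̄(x) = ∫_a^x v). Suppose ‖ū − v̄‖_{L^1(a,b)} ≤ δ, u is continuous on an interval (c,d) ⊂ (a,b), v ≡ 1 on (c,d), and |u − 1| ≥ ρ on all of (c,d). Then for every nonnegative w ∈ C¹_c((c,d)), ρ ‖w‖_{L^1} ≤ δ ‖w'‖_∞. In particular, if δ < ρ ‖w‖_{L^1}/‖w'‖_∞ for some such w, a contradiction arises, so there exists a point ξ ∈ (c,d) with |u(ξ) − 1| < ρ. -/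
open MeasureTheory intervalIntegral Set

theorem stmt11 (a b c d δ ρ : ℝ) (hδ : 0 < δ) (hρ : 0 < ρ)
    (hab : a < b) (hcd : c < d) (hsub : Set.Ioo c d ⊆ Set.Ioo a b)
    (u v : ℝ → ℝ)
    (hu : IntervalIntegrable u MeasureTheory.volume a b)
    (hv : IntervalIntegrable v MeasureTheory.volume a b)
    (hclose : ∫ x in a..b, |(∫ y in a..x, u y) - (∫ y in a..x, v y)| ≤ δ)
    (hucont : ContinuousOn u (Set.Ioo c d))
    (hv1 : ∀ x ∈ Set.Ioo c d, v x = 1) :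
    ((∀ x ∈ Set.Ioo c d, ρ ≤ |u x - 1|) →
      ∀ w w' : ℝ → ℝ, (∀ x, HasDerivAt w (w' x) x) → Continuous w' →
        (∀ x, 0 ≤ w x) → (∀ x ∉ Set.Ioo c d, w x = 0) →
        ∀ M : ℝ, (∀ x, |w' x| ≤ M) →
          ρ * ∫ x in c..d, w x ≤ δ * M) ∧
    ((∃ w w' : ℝ → ℝ, (∀ x, HasDerivAt w (w' x) x) ∧ Continuous w' ∧
        (∀ x, 0 ≤ w x) ∧ (∀ x ∉ Set.Ioo c d, w x = 0) ∧
        ∃ M : ℝ, (∀ x, |w' x| ≤ M) ∧ δ * M < ρ * ∫ x in c..d, w x) →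
      ∃ ξ ∈ Set.Ioo c d, |u ξ - 1| < ρ) := by
  obtain ⟨hac, hdb⟩ := (Set.Ioo_subset_Ioo_iff hcd).mp hsub
  have hIccsub : Set.Icc c d ⊆ Set.Icc a b := Set.Icc_subset_Icc hac hdb
  have huvi : IntervalIntegrable (fun y => u y - v y) volume a b := hu.sub hv
  set G : ℝ → ℝ := fun x => ∫ y in a..x, (u y - v y) with hG
  have hGcont : ContinuousOn G (Set.Icc a b) := by
    have := continuousOn_primitive_interval (f := fun y => u y - v y) (a := a) (b := b)
      (μ := volume) (by
        rw [Set.uIcc_of_le hab.le]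
        exact (intervalIntegrable_iff_integrableOn_Icc_of_le hab.le).mp huvi)
    rwa [Set.uIcc_of_le hab.le] at this
  have hGint : ∫ x in a..b, |G x| ≤ δ := by
    refine le_trans (le_of_eq ?_) hclose
    apply intervalIntegral.integral_congr
    intro x hx
    rw [Set.uIcc_of_le hab.le] at hx
    have hss : Set.uIcc a x ⊆ Set.uIcc a b := by
      rw [Set.uIcc_of_le hab.le, Set.uIcc_of_le hx.1]
      exact Set.Icc_subset_Icc_right hx.2
    have h1 : IntervalIntegrable u volume a x := hu.mono_set hss
    have h2 : IntervalIntegrable v volume a x := hv.mono_set hss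
    simp only [hG, intervalIntegral.integral_sub h1 h2]
  have huvcont : ContinuousOn (fun y => u y - v y) (Set.Ioo c d) := by
    apply hucont.sub
    exact (continuousOn_const (c := (1:ℝ))).congr hv1
  have hGderiv : ∀ x ∈ Set.Ioo c d, HasDerivAt G (u x - 1) x := by
    intro x hx
    have hx' : x ∈ Set.Ioo a b := hsub hx
    have hcx : ContinuousAt (fun y => u y - v y) x :=
      huvcont.continuousAt (isOpen_Ioo.mem_nhds hx)
    have huvx : IntervalIntegrable (fun y => u y - v y) volume a x :=
      huvi.mono_set (by
        rw [Set.uIcc_of_le hab.le, Set.uIcc_of_le (le_of_lt hx'.1)]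
        exact Set.Icc_subset_Icc_right hx'.2.le)
    have hmeas := ContinuousOn.stronglyMeasurableAtFilter (μ := volume)
      isOpen_Ioo huvcont x hx
    have := intervalIntegral.integral_hasDerivAt_right huvx hmeas hcx
    simpa [hG, hv1 x hx] using this
  have key : (∀ x ∈ Set.Ioo c d, ρ ≤ |u x - 1|) →
      ∀ w w' : ℝ → ℝ, (∀ x, HasDerivAt w (w' x) x) → Continuous w' →
        (∀ x, 0 ≤ w x) → (∀ x ∉ Set.Ioo c d, w x = 0) →
        ∀ M : ℝ, (∀ x, |w' x| ≤ M) →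
          ρ * ∫ x in c..d, w x ≤ δ * M := by
    intro hfar w w' hw hw'c hwpos hw0 M hM
    have hwc : Continuous w := continuous_iff_continuousAt.mpr fun x => (hw x).continuousAt
    have hwc0 : w c = 0 := hw0 c (by simp)
    have hwd0 : w d = 0 := hw0 d (by simp)
    have hMnn : 0 ≤ M := le_trans (abs_nonneg _) (hM c)
    have hucd : IntervalIntegrable u volume c d := hu.mono_set (by
      rw [Set.uIcc_of_le hab.le, Set.uIcc_of_le hcd.le]; exact hIccsub)
    have hu1 : IntervalIntegrable (fun x => u x - 1) volume c d :=
      hucd.sub intervalIntegrable_const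
    have hwu1 : IntervalIntegrable (fun x => w x * (u x - 1)) volume c d :=
      hu1.continuousOn_mul hwc.continuousOn
    have hGcd : ContinuousOn G (Set.uIcc c d) := by
      rw [Set.uIcc_of_le hcd.le]; exact hGcont.mono hIccsub
    have hw'G : IntervalIntegrable (fun x => w' x * G x) volume c d :=
      (hw'c.continuousOn.mul hGcd).intervalIntegrable
    have hibp : ∫ x in c..d, (w' x * G x + w x * (u x - 1)) = 0 := by
      have := intervalIntegral.integral_eq_sub_of_hasDeriv_right_of_le hcd.le
        (f := fun x => w x * G x)
        (f' := fun x => w' x * G x + w x * (u x - 1))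
        (hwc.continuousOn.mul (hGcont.mono hIccsub))
        (fun x hx => ((hw x).mul (hGderiv x hx)).hasDerivWithinAt)
        (hw'G.add hwu1)
      rw [this]; simp [hwc0, hwd0]
    have hsplit : ∫ x in c..d, w x * (u x - 1) = - ∫ x in c..d, w' x * G x := by
      have := intervalIntegral.integral_add hw'G hwu1
      rw [hibp] at this
      linarith
    have hbound : |∫ x in c..d, w' x * G x| ≤ δ * M := by
      have h1 : |∫ x in c..d, w' x * G x| ≤ ∫ x in c..d, |w' x * G x| :=
        intervalIntegral.abs_integral_le_integral_abs hcd.le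
      have h2 : ∫ x in c..d, |w' x * G x| ≤ ∫ x in c..d, M * |G x| := by
        apply intervalIntegral.integral_mono_on hcd.le hw'G.abs
          ((continuous_const.continuousOn.mul hGcd.abs).intervalIntegrable)
        intro x _
        rw [abs_mul]
        exact mul_le_mul_of_nonneg_right (hM x) (abs_nonneg _)
      have h3 : ∫ x in c..d, M * |G x| = M * ∫ x in c..d, |G x| :=
        intervalIntegral.integral_const_mul M _
      have hGabsint : IntervalIntegrable (fun x => |G x|) volume a b := by
        apply ContinuousOn.intervalIntegrable
        rw [Set.uIcc_of_le hab.le]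
        exact hGcont.abs
      have h4 : ∫ x in c..d, |G x| ≤ ∫ x in a..b, |G x| := by
        apply intervalIntegral.integral_mono_interval hac hcd.le hdb
        · exact Filter.Eventually.of_forall fun x => abs_nonneg _
        · exact hGabsint
      calc |∫ x in c..d, w' x * G x| ≤ ∫ x in c..d, M * |G x| := h1.trans h2
        _ = M * ∫ x in c..d, |G x| := h3
        _ ≤ M * δ := mul_le_mul_of_nonneg_left (h4.trans hGint) hMnn
        _ = δ * M := mul_comm _ _
    -- sign dichotomy
    have hdich : (∀ x ∈ Set.Ioo c d, ρ ≤ u x - 1) ∨ (∀ x ∈ Set.Ioo c d, u x - 1 ≤ -ρ) := by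
      by_cases hneg : ∃ y ∈ Set.Ioo c d, u y - 1 ≤ -ρ
      · right
        obtain ⟨y, hy, hyneg⟩ := hneg
        intro x hx
        rcases le_abs.mp (hfar x hx) with h | h
        · exfalso
          have hsubxy : Set.uIcc x y ⊆ Set.Ioo c d :=
            Set.OrdConnected.uIcc_subset Set.ordConnected_Ioo hx hy
          have hcontxy : ContinuousOn u (Set.uIcc x y) := hucont.mono hsubxy
          have hmem : (1:ℝ) ∈ Set.uIcc (u x) (u y) :=
            Set.mem_uIcc.mpr (Or.inr ⟨by linarith, by linarith⟩)
          obtain ⟨z, hz, hz1⟩ := intermediate_value_uIcc hcontxy hmem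
          have := hfar z (hsubxy hz)
          rw [hz1] at this
          simp at this
          linarith
        · linarith
      · left
        intro x hx
        rcases le_abs.mp (hfar x hx) with h | h
        · exact h
        · exact absurd ⟨x, hx, by linarith⟩ hneg
    have hwint : IntervalIntegrable w volume c d := hwc.intervalIntegrable c d
    have hfinal : ρ * ∫ x in c..d, w x ≤ |∫ x in c..d, w x * (u x - 1)| := by
      rcases hdich with hpos | hneg
      · have h1 : ∫ x in c..d, ρ * w x ≤ ∫ x in c..d, w x * (u x - 1) := by
          apply intervalIntegral.integral_mono_on hcd.le (hwint.const_mul ρ) hwu1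
          intro x hx
          by_cases hxio : x ∈ Set.Ioo c d
          · nlinarith [hwpos x, hpos x hxio]
          · rw [hw0 x hxio]; ring_nf; simp
        rw [intervalIntegral.integral_const_mul] at h1
        exact h1.trans (le_abs_self _)
      · have h1 : ∫ x in c..d, w x * (u x - 1) ≤ ∫ x in c..d, (-ρ) * w x := by
          apply intervalIntegral.integral_mono_on hcd.le hwu1 (hwint.const_mul (-ρ))
          intro x hx
          by_cases hxio : x ∈ Set.Ioo c d
          · nlinarith [hwpos x, hneg x hxio]
          · rw [hw0 x hxio]; ring_nf; simp
        rw [intervalIntegral.integral_const_mul] at h1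
        have := neg_abs_le (∫ x in c..d, w x * (u x - 1))
        linarith
    rw [hsplit, abs_neg] at hfinal
    exact hfinal.trans hbound
  refine ⟨key, ?_⟩
  rintro ⟨w, w', hw, hw'c, hwpos, hw0, M, hM, hlt⟩
  by_contra hcon
  push_neg at hcon
  have hfar : ∀ x ∈ Set.Ioo c d, ρ ≤ |u x - 1| := fun x hx => hcon x hx
  exact absurd (key hfar w w' hw hw'c hwpos hw0 M hM) (not_le.mpr hlt)
end

section
/- Let W : ℝ → ℝ be continuous, nonnegative, with W > 0 on (−1,1) and W(±1)=0. Let u ∈ H^1(a,b), ε > 0, and suppose there exist points a ≤ x₁ < x₂ ≤ b with u(x₁) ≤ −1 and u(x₂) ≥ 1. Then ∫_{x₁}^{x₂} [ (ε/2) u_x² + W(u)/ε ] dx ≥ c₀, where c₀ = ∫_{−1}^1 √(2W(s)) ds. -/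
/-!
Modica–Mortola trick: with `Φ(t) = ∫₋₁ᵗ √(2W)`, AM–GM gives
`(Φ ∘ u)' = √(2W(u)) u' ≤ (ε/2) u'² + W(u)/ε`, so the energy on `[x₁, x₂]` is at least
`Φ(u x₂) - Φ(u x₁)`, which is at least `Φ 1 - Φ (-1) = c₀` because `Φ` is nondecreasing.
-/

open MeasureTheory intervalIntegral Set

theorem sqrt_two_mul_mul_le {ε w : ℝ} (hε : 0 < ε) (hw : 0 ≤ w) (v : ℝ) :
    √(2 * w) * v ≤ ε / 2 * v ^ 2 + w / ε := by
  have hs : √(2 * w) ^ 2 = 2 * w := Real.sq_sqrt (by positivity)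
  have hgap : ε / 2 * v ^ 2 + w / ε - √(2 * w) * v = (ε * v - √(2 * w)) ^ 2 / (2 * ε) := by
    field_simp
    linear_combination (-1 : ℝ) * hs
  exact sub_nonneg.1 (hgap ▸ by positivity)

theorem integral_le_of_comp_mul_deriv_le {f f' φ g : ℝ → ℝ} {a b : ℝ} (hab : a ≤ b)
    (hf : ∀ x ∈ Icc a b, HasDerivAt f (f' x) x) (hφ : Continuous φ)
    (hg : IntervalIntegrable g volume a b) (hle : ∀ x ∈ Ioo a b, φ (f x) * f' x ≤ g x) :
    ∫ y in f a..f b, φ y ≤ ∫ x in a..b, g x := by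
  set G : ℝ → ℝ := fun t => ∫ s in f a..t, φ s
  have hGf : ∀ x ∈ Icc a b, HasDerivAt (G ∘ f) (φ (f x) * f' x) x := fun x hx =>
    (integral_hasDerivAt_right (hφ.intervalIntegrable _ _) (hφ.stronglyMeasurableAtFilter _ _)
      hφ.continuousAt).comp x (hf x hx)
  have := sub_le_integral_of_hasDeriv_right_of_le hab
    (fun x hx => (hGf x hx).continuousAt.continuousWithinAt)
    (fun x hx => (hGf x (Ioo_subset_Icc_self hx)).hasDerivWithinAt)
    ((intervalIntegrable_iff_integrableOn_Icc_of_le hab).1 hg) hle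
  simpa [G] using this

theorem stmt12_general (a b x₁ x₂ ε : ℝ) (hε : 0 < ε) (hax : a ≤ x₁) (hx : x₁ < x₂) (hxb : x₂ ≤ b)
    (W : ℝ → ℝ) (hWc : Continuous W) (hWnn : ∀ s, 0 ≤ W s)
    (u u' : ℝ → ℝ) (hu : ∀ x ∈ Set.Icc a b, HasDerivAt u (u' x) x)
    (hint : IntervalIntegrable (fun x => ε / 2 * (u' x) ^ 2 + W (u x) / ε)
      MeasureTheory.volume x₁ x₂)
    (h1 : u x₁ ≤ -1) (h2 : 1 ≤ u x₂) :
    (∫ s in (-1:ℝ)..1, Real.sqrt (2 * W s)) ≤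
      ∫ x in x₁..x₂, (ε / 2 * (u' x) ^ 2 + W (u x) / ε) := by
  have hφ : Continuous fun s => √(2 * W s) := by fun_prop
  calc ∫ s in (-1:ℝ)..1, √(2 * W s)
      ≤ ∫ s in u x₁..u x₂, √(2 * W s) :=
        integral_mono_interval h1 (by norm_num) h2
          (ae_of_all _ fun _ => Real.sqrt_nonneg _) (hφ.intervalIntegrable _ _)
    _ ≤ ∫ x in x₁..x₂, (ε / 2 * (u' x) ^ 2 + W (u x) / ε) :=
        integral_le_of_comp_mul_deriv_le hx.le
          (fun x hx => hu x ⟨hax.trans hx.1, hx.2.trans hxb⟩) hφ hint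
          (fun x _ => sqrt_two_mul_mul_le hε (hWnn _) _)

theorem stmt12 (a b x₁ x₂ ε : ℝ) (hε : 0 < ε) (hax : a ≤ x₁) (hx : x₁ < x₂) (hxb : x₂ ≤ b)
    (W : ℝ → ℝ) (hWc : Continuous W) (hWnn : ∀ s, 0 ≤ W s)
    (hWpos : ∀ s ∈ Set.Ioo (-1:ℝ) 1, 0 < W s) (hW1 : W 1 = 0) (hWm1 : W (-1) = 0)
    (u u' : ℝ → ℝ) (hu : ∀ x ∈ Set.Icc a b, HasDerivAt u (u' x) x)
    (hint : IntervalIntegrable (fun x => ε / 2 * (u' x) ^ 2 + W (u x) / ε)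
      MeasureTheory.volume x₁ x₂)
    (h1 : u x₁ ≤ -1) (h2 : 1 ≤ u x₂) :
    (∫ s in (-1:ℝ)..1, Real.sqrt (2 * W s)) ≤
      ∫ x in x₁..x₂, (ε / 2 * (u' x) ^ 2 + W (u x) / ε) :=
  stmt12_general a b x₁ x₂ ε hε hax hx hxb W hWc hWnn u u' hu hint h1 h2
end

section
/- Let W : ℝᵐ → ℝ be continuous and nonnegative, let u ∈ H¹((a,b); ℝᵐ), and let ε > 0. Then for any a ≤ c < d ≤ b, ∫_c^d [ (ε/2)|u_x|² + W(u)/ε ] dx ≥ √2 ∫_c^d √(W(u(x))) |u_x(x)| dx ≥ φ(u(c), u(d)), where φ is the geodesic distance induced by the conformal metric √(2W)|dz|. -/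
/-! Pointwise, `√2 √w p ≤ (ε/2) p² + w/ε` is the AM–GM inequality, since the right side minus the
left side is `(ε p - √(2w))² / (2ε)`; integrating along `u` gives the first inequality. For the
second, the affine reparametrization of `u|[c,d]` over `[0,1]` is an admissible curve in the
definition of `geoDist`, and the weighted length `∫ √(W z) ‖z'‖` does not change under it. -/

open MeasureTheory

/-- The geodesic distance induced by the degenerate conformal metric `√(2W) |dz|`. -/
noncomputable def geoDist {m : ℕ} (W : EuclideanSpace ℝ (Fin m) → ℝ)
    (ξ₁ ξ₂ : EuclideanSpace ℝ (Fin m)) : ℝ :=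
  sInf { e : ℝ | ∃ z z' : ℝ → EuclideanSpace ℝ (Fin m),
    (∀ s, HasDerivAt z (z' s) s) ∧ Continuous z' ∧ z 0 = ξ₁ ∧ z 1 = ξ₂ ∧
    e = Real.sqrt 2 * ∫ s in (0:ℝ)..1, Real.sqrt (W (z s)) * ‖z' s‖ }

theorem sqrt_two_mul_sqrt_mul_le_add_div {w ε : ℝ} (p : ℝ) (hw : 0 ≤ w) (hε : 0 < ε) :
    √2 * (√w * p) ≤ ε / 2 * p ^ 2 + w / ε := by
  have hw' : √w ^ 2 = w := Real.sq_sqrt hw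
  have h2 : √2 ^ 2 = 2 := Real.sq_sqrt zero_le_two
  have key : 2 * ε * (√2 * (√w * p)) ≤ 2 * ε * (ε / 2 * p ^ 2 + w / ε) := by
    have hrhs : 2 * ε * (ε / 2 * p ^ 2 + w / ε) = (ε * p) ^ 2 + 2 * w := by
      field_simp
    rw [hrhs]
    nlinarith [sq_nonneg (ε * p - √2 * √w)]
  exact le_of_mul_le_mul_left key (by positivity)

theorem sqrt_two_mul_integral_le_integral {f g : ℝ → ℝ} {c d ε : ℝ} (hf : Continuous f)
    (hg : Continuous g) (hf_nonneg : ∀ x, 0 ≤ f x) (hε : 0 < ε) (hcd : c ≤ d) :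
    √2 * ∫ x in c..d, √(f x) * g x ≤ ∫ x in c..d, (ε / 2 * g x ^ 2 + f x / ε) := by
  rw [← intervalIntegral.integral_const_mul]
  refine intervalIntegral.integral_mono_on hcd ?_ ?_
    (fun x _ => sqrt_two_mul_sqrt_mul_le_add_div (g x) (hf_nonneg x) hε)
  · exact (continuous_const.mul (hf.sqrt.mul hg)).intervalIntegrable c d
  · exact ((continuous_const.mul (hg.pow 2)).add (hf.div_const ε)).intervalIntegrable c d

section geoDist

variable {m : ℕ} (W : EuclideanSpace ℝ (Fin m) → ℝ)

theorem geoDist_le_of_hasDerivAt {z z' : ℝ → EuclideanSpace ℝ (Fin m)}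
    (hz : ∀ s, HasDerivAt z (z' s) s) (hz' : Continuous z') :
    geoDist W (z 0) (z 1) ≤ √2 * ∫ s in (0 : ℝ)..1, √(W (z s)) * ‖z' s‖ := by
  refine csInf_le ⟨0, ?_⟩ ⟨z, z', hz, hz', rfl, rfl, rfl⟩
  rintro e ⟨y, y', -, -, -, -, rfl⟩
  have : 0 ≤ ∫ s in (0 : ℝ)..1, √(W (y s)) * ‖y' s‖ :=
    intervalIntegral.integral_nonneg zero_le_one fun s _ => by positivity
  positivity

theorem geoDist_le_integral {c d : ℝ} (hcd : c ≤ d) {u u' : ℝ → EuclideanSpace ℝ (Fin m)}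
    (hu : ∀ x, HasDerivAt u (u' x) x) (hu' : Continuous u') :
    geoDist W (u c) (u d) ≤ √2 * ∫ x in c..d, √(W (u x)) * ‖u' x‖ := by
  have hφ : ∀ s : ℝ, HasDerivAt (fun s => (d - c) * s + c) (d - c) s := fun s => by
    simpa using ((hasDerivAt_id s).const_mul (d - c)).add_const c
  have hz : ∀ s, HasDerivAt (fun s => u ((d - c) * s + c)) ((d - c) • u' ((d - c) * s + c)) s :=
    fun s => (hu _).scomp s (hφ s)
  have hz' : Continuous fun s => (d - c) • u' ((d - c) * s + c) := by fun_prop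
  have hlength : ∫ s in (0 : ℝ)..1, √(W (u ((d - c) * s + c))) * ‖(d - c) • u' ((d - c) * s + c)‖ =
      ∫ x in c..d, √(W (u x)) * ‖u' x‖ := by
    simp_rw [norm_smul, Real.norm_eq_abs, abs_of_nonneg (sub_nonneg.mpr hcd),
      mul_left_comm _ (d - c), intervalIntegral.integral_const_mul]
    simpa using intervalIntegral.smul_integral_comp_mul_add (a := 0) (b := 1)
      (fun x => √(W (u x)) * ‖u' x‖) (d - c) c
  simpa [hlength] using geoDist_le_of_hasDerivAt W hz hz'

end geoDist

theorem stmt18_general {m : ℕ} (W : EuclideanSpace ℝ (Fin m) → ℝ) (hWc : Continuous W)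
    (hWnn : ∀ ξ, 0 ≤ W ξ) (c d ε : ℝ) (hε : 0 < ε)
    (hcd : c < d)
    (u u' : ℝ → EuclideanSpace ℝ (Fin m))
    (hu : ∀ x, HasDerivAt u (u' x) x) (hu' : Continuous u') :
    Real.sqrt 2 * (∫ x in c..d, Real.sqrt (W (u x)) * ‖u' x‖) ≤
        ∫ x in c..d, (ε / 2 * ‖u' x‖ ^ 2 + W (u x) / ε) ∧
      geoDist W (u c) (u d) ≤
        Real.sqrt 2 * ∫ x in c..d, Real.sqrt (W (u x)) * ‖u' x‖ := by
  have hu_cont : Continuous u := continuous_iff_continuousAt.mpr fun x => (hu x).continuousAt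
  exact ⟨sqrt_two_mul_integral_le_integral (hWc.comp hu_cont) hu'.norm (fun x => hWnn (u x)) hε
      hcd.le, geoDist_le_integral W hcd.le hu hu'⟩

theorem stmt18 {m : ℕ} (W : EuclideanSpace ℝ (Fin m) → ℝ) (hWc : Continuous W)
    (hWnn : ∀ ξ, 0 ≤ W ξ) (a b c d ε : ℝ) (hε : 0 < ε)
    (hac : a ≤ c) (hcd : c < d) (hdb : d ≤ b)
    (u u' : ℝ → EuclideanSpace ℝ (Fin m))
    (hu : ∀ x, HasDerivAt u (u' x) x) (hu' : Continuous u') :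
    Real.sqrt 2 * (∫ x in c..d, Real.sqrt (W (u x)) * ‖u' x‖) ≤
        ∫ x in c..d, (ε / 2 * ‖u' x‖ ^ 2 + W (u x) / ε) ∧
      geoDist W (u c) (u d) ≤
        Real.sqrt 2 * ∫ x in c..d, Real.sqrt (W (u x)) * ‖u' x‖ :=
  stmt18_general W hWc hWnn c d ε hε hcd u u' hu hu'
end

section
/- Let u : [a,b] → ℝ be continuous, let v : [a,b] → {−1,+1} be a step function with N jumps at h₁ < ⋯ < h_N separated by at least 2r, let K ⊂ ℝ∖{−1,+1} be closed, and let ρ > 0 be such that (−1−ρ,−1+ρ) ∪ (1−ρ,1+ρ) ⊂ ℝ∖K and inf{ |∫_{ξ₁}^{ξ₂} √(2W(s)) ds| : ξ₁ ∈ K, ξ₂ ∈ I_ρ } > 2Γ, where Γ := 2N max{∫_{1−ρ}^1 √(2W)}, {∫_{−1}^{−1+ρ} √(2W)}. Suppose for each i there exist points x_i^- ∈ (h_i − δ₁/2, h_i) and x_i^+ ∈ (h_i, h_i + δ₁/2) with |u(x_i^±) − v(x_i^±)| < ρ, and suppose P_ε[u] ≤ N c₀ + Γ. Then d(u^{−1}(K),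 {h₁,…,h_N}) < δ₁/2 in the Hausdorff sense; i.e., every point of u^{−1}(K) lies within δ₁/2 of some h_i. -/
/-!
Suppose `u x₀ ∈ K` although `x₀` is at distance at least `δ₁/2` from every jump. On each window
`(xᵢ⁻, xᵢ⁺]` around a jump, `u` runs from a `ρ`-neighbourhood of one well to one of the other;
since `ε/2 u'² + W(u)/ε ≥ |(G ∘ u)'|` for `G' = √(2W)`, this costs at least `c₀` minus the two
boundary layers `∫_{-1}^{-1+ρ} √(2W)` and `∫_{1-ρ}^1 √(2W)`. The interval from `x₀` to the nearest
sample point `xᵢ^±` meets none of these windows and carries `u` from `K` into a well, so it costs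
more than `2Γ`. Summing, the energy exceeds `N c₀ + Γ`.
-/

open MeasureTheory Set Function
open scoped Interval

lemma sqrt_two_mul_mul_abs_le {ε : ℝ} (hε : 0 < ε) {c : ℝ} (hc : 0 ≤ c) (t : ℝ) :
    √(2 * c) * |t| ≤ ε / 2 * t ^ 2 + c / ε := by
  have hsq : √(2 * c) ^ 2 = 2 * c := Real.sq_sqrt (by linarith)
  rw [show ε / 2 * t ^ 2 + c / ε = (ε ^ 2 * t ^ 2 + 2 * c) / (2 * ε) by field_simp,
    le_div_iff₀ (by positivity)]
  nlinarith [sq_nonneg (ε * |t| - √(2 * c)), sq_abs t]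

/-- The Modica–Mortola trick: by the chain rule and `2√(2W)|u'| ≤ ε u'² + 2W/ε`, the energy of
`u` on an interval bounds the geodesic distance `|∫ √(2W)|` between the endpoint values. -/
lemma abs_integral_sqrt_comp_le_setIntegral {W : ℝ → ℝ} (hW : Continuous W) (hW0 : ∀ s, 0 ≤ W s)
    {ε : ℝ} (hε : 0 < ε) {u u' : ℝ → ℝ} (hu : ∀ x, HasDerivAt u (u' x) x) (hu' : Continuous u')
    (p q : ℝ) :
    |∫ s in u p..u q, √(2 * W s)| ≤ ∫ x in Ι p q, (ε / 2 * u' x ^ 2 + W (u x) / ε) := by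
  have hφ : Continuous fun s => √(2 * W s) := by fun_prop
  have hucont : Continuous u := continuous_iff_continuousAt.2 fun x => (hu x).continuousAt
  rw [← intervalIntegral.integral_comp_mul_deriv (fun x _ => hu x) hu'.continuousOn hφ]
  rw [← Real.norm_eq_abs]
  refine intervalIntegral.norm_integral_le_integral_norm_uIoc.trans ?_
  refine setIntegral_mono_on ?_ ?_ measurableSet_uIoc fun x _ => ?_
  · exact (Continuous.norm (by fun_prop)).integrableOn_uIoc
  · exact (by fun_prop : Continuous _).integrableOn_uIoc
  · simpa [Real.norm_eq_abs, abs_mul, abs_of_nonneg (Real.sqrt_nonneg _)] using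
      sqrt_two_mul_mul_abs_le hε (hW0 (u x)) (u' x)

lemma integral_le_abs_integral_of_le_of_le {φ : ℝ → ℝ} {c d ξ₁ ξ₂ : ℝ}
    (hφ : IntervalIntegrable φ volume ξ₁ ξ₂) (hφ0 : ∀ s, 0 ≤ φ s) (h₁ : ξ₁ ≤ c) (h₂ : d ≤ ξ₂) :
    ∫ s in c..d, φ s ≤ |∫ s in ξ₁..ξ₂, φ s| := by
  rcases le_total c d with hcd | hdc
  · exact (intervalIntegral.integral_mono_interval h₁ hcd h₂ (ae_of_all _ hφ0) hφ).trans
      (le_abs_self _)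
  · rw [intervalIntegral.integral_symm]
    have := intervalIntegral.integral_nonneg (μ := volume) hdc fun s _ => hφ0 s
    exact (neg_nonpos.2 this).trans (abs_nonneg _)

lemma integral_sub_boundary_layers_le {φ : ℝ → ℝ} (hφ : Continuous φ) (hφ0 : ∀ s, 0 ≤ φ s)
    {α β ρ ξ₁ ξ₂ : ℝ} (h : ξ₁ ≤ α + ρ ∧ β - ρ ≤ ξ₂ ∨ ξ₂ ≤ α + ρ ∧ β - ρ ≤ ξ₁) :
    (∫ s in α..β, φ s) - ((∫ s in α..α + ρ, φ s) + ∫ s in β - ρ..β, φ s) ≤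
      |∫ s in ξ₁..ξ₂, φ s| := by
  have hint : ∀ c d, IntervalIntegrable φ volume c d := hφ.intervalIntegrable
  have hsplit : (∫ s in α..β, φ s) - ((∫ s in α..α + ρ, φ s) + ∫ s in β - ρ..β, φ s) =
      ∫ s in α + ρ..β - ρ, φ s := by
    rw [← intervalIntegral.integral_add_adjacent_intervals (hint α (α + ρ)) (hint _ β),
      ← intervalIntegral.integral_add_adjacent_intervals (hint (α + ρ) (β - ρ)) (hint _ β)]
    ring
  rw [hsplit]
  rcases h with ⟨h₁, h₂⟩ | ⟨h₂, h₁⟩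
  · exact integral_le_abs_integral_of_le_of_le (hint _ _) hφ0 h₁ h₂
  · rw [intervalIntegral.integral_symm ξ₂ ξ₁, abs_neg]
    exact integral_le_abs_integral_of_le_of_le (hint _ _) hφ0 h₂ h₁

lemma integral_sub_boundary_layers_le_of_near_wells {φ : ℝ → ℝ} (hφ : Continuous φ)
    (hφ0 : ∀ s, 0 ≤ φ s) {ρ σ ξ₁ ξ₂ : ℝ} (hσ : σ = 1 ∨ σ = -1) (h₁ : |ξ₁ - σ| < ρ)
    (h₂ : |ξ₂ + σ| < ρ) :
    (∫ s in (-1)..1, φ s) - ((∫ s in (-1)..(-1 + ρ), φ s) + ∫ s in (1 - ρ)..1, φ s) ≤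
      |∫ s in ξ₁..ξ₂, φ s| := by
  apply integral_sub_boundary_layers_le hφ hφ0
  rw [abs_lt] at h₁ h₂
  rcases hσ with rfl | rfl
  · exact Or.inr ⟨by linarith, by linarith⟩
  · exact Or.inl ⟨by linarith, by linarith⟩

lemma eq_neg_of_ne_of_sign {x y : ℝ} (hx : x = 1 ∨ x = -1) (hy : y = 1 ∨ y = -1) (hne : x ≠ y) :
    y = -x := by
  rcases hx with rfl | rfl <;> rcases hy with rfl | rfl <;> simp_all

lemma mem_wells_of_abs_sub_lt {ρ σ ξ : ℝ} (hσ : σ = 1 ∨ σ = -1) (h : |ξ - σ| < ρ) :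
    ξ ∈ Ioo (-1 - ρ) (-1 + ρ) ∪ Ioo (1 - ρ) (1 + ρ) := by
  rw [abs_lt] at h
  rcases hσ with rfl | rfl
  · exact Or.inr ⟨by linarith, by linarith⟩
  · exact Or.inl ⟨by linarith, by linarith⟩

lemma disjoint_uIoc_Ioc_of_abs_sub_le {x y p q : ℝ} (hx : x ∉ Icc p q) (hp : |x - y| ≤ |x - p|)
    (hq : |x - y| ≤ |x - q|) : Disjoint (Ι x y) (Ioc p q) := by
  rw [Set.disjoint_left]
  rintro z ⟨hz₁, hz₂⟩ ⟨hzp, hzq⟩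
  rw [mem_Icc, not_and_or, not_le, not_le] at hx
  rcases le_total x y with hxy | hyx
  · rw [min_eq_left hxy] at hz₁
    rw [max_eq_right hxy] at hz₂
    rw [abs_of_nonpos (by linarith), abs_of_nonpos (by rcases hx with h | h <;> linarith)] at hp
    rcases hx with h | h <;> linarith
  · rw [min_eq_right hyx] at hz₁
    rw [max_eq_left hyx] at hz₂
    rw [abs_of_nonneg (by linarith), abs_of_nonneg (by rcases hx with h | h <;> linarith)] at hq
    rcases hx with h | h <;> linarith

lemma exists_uIoc_disjoint_Ioc {ι : Type*} [Finite ι] [Nonempty ι] (p q : ι → ℝ) {x : ℝ}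
    (hx : ∀ i, x ∉ Icc (p i) (q i)) :
    ∃ y ∈ range p ∪ range q, ∀ i, Disjoint (Ι x y) (Ioc (p i) (q i)) := by
  obtain ⟨y, hy, hmin⟩ := (range p ∪ range q).exists_min_image (fun y => |x - y|)
    ((Set.finite_range p).union (Set.finite_range q)) ((range_nonempty p).mono subset_union_left)
  refine ⟨y, hy, fun i => disjoint_uIoc_Ioc_of_abs_sub_le (hx i) ?_ ?_⟩
  · exact hmin _ (Or.inl (mem_range_self i))
  · exact hmin _ (Or.inr (mem_range_self i))

lemma setIntegral_add_sum_le {α ι : Type*} [MeasurableSpace α] {μ : Measure α} [Fintype ι]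
    {f : α → ℝ} {s t : Set α} {I : ι → Set α} (hI : ∀ i, MeasurableSet (I i))
    (hIdisj : Pairwise (Disjoint on I)) (hsI : ∀ i, Disjoint s (I i)) (hst : s ⊆ t)
    (hIt : ∀ i, I i ⊆ t) (hf : IntegrableOn f t μ) (hf0 : 0 ≤ᵐ[μ.restrict t] f) :
    ∫ x in s, f x ∂μ + ∑ i, ∫ x in I i, f x ∂μ ≤ ∫ x in t, f x ∂μ := by
  rw [← integral_iUnion_fintype hI hIdisj fun i => hf.mono_set (hIt i),
    ← setIntegral_union (disjoint_iUnion_right.2 hsI) (MeasurableSet.iUnion hI)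
      (hf.mono_set hst) (hf.mono_set (iUnion_subset hIt))]
  exact setIntegral_mono_set hf hf0 (union_subset hst (iUnion_subset hIt)).eventuallyLE

lemma sInf_add_card_mul_le_energy {W : ℝ → ℝ} (hW : Continuous W) (hW0 : ∀ s, 0 ≤ W s)
    {ε : ℝ} (hε : 0 < ε) {u u' : ℝ → ℝ} (hu : ∀ x, HasDerivAt u (u' x) x) (hu' : Continuous u')
    {K : Set ℝ} {a b ρ x₀ : ℝ} (hx₀ : x₀ ∈ Icc a b) (hx₀K : u x₀ ∈ K)
    {ι : Type*} [Fintype ι] [Nonempty ι] {xm xp σ : ι → ℝ} (hxm : ∀ i, a ≤ xm i)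
    (hxp : ∀ i, xp i ≤ b) (hlt : ∀ i, xm i ≤ xp i)
    (hdisj : Pairwise (Disjoint on fun i => Ioc (xm i) (xp i)))
    (hfar : ∀ i, x₀ ∉ Icc (xm i) (xp i)) (hσ : ∀ i, σ i = 1 ∨ σ i = -1)
    (hum : ∀ i, |u (xm i) - σ i| < ρ) (hup : ∀ i, |u (xp i) + σ i| < ρ) :
    sInf { e : ℝ | ∃ ξ₁ ∈ K, ∃ ξ₂ ∈ Ioo (-1 - ρ) (-1 + ρ) ∪ Ioo (1 - ρ) (1 + ρ),
        e = |∫ s in ξ₁..ξ₂, √(2 * W s)| } +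
      Fintype.card ι * ((∫ s in (-1)..1, √(2 * W s)) -
        ((∫ s in (-1)..(-1 + ρ), √(2 * W s)) + ∫ s in (1 - ρ)..1, √(2 * W s))) ≤
      ∫ x in a..b, (ε / 2 * u' x ^ 2 + W (u x) / ε) := by
  have hφ : Continuous fun s => √(2 * W s) := by fun_prop
  have hucont : Continuous u := continuous_iff_continuousAt.2 fun x => (hu x).continuousAt
  set f : ℝ → ℝ := fun x => ε / 2 * u' x ^ 2 + W (u x) / ε
  have hf0 : ∀ x, 0 ≤ f x := fun x => by have := hW0 (u x); positivity
  have hpair : ∀ i, (∫ s in (-1)..1, √(2 * W s)) -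
      ((∫ s in (-1)..(-1 + ρ), √(2 * W s)) + ∫ s in (1 - ρ)..1, √(2 * W s)) ≤
      ∫ x in Ioc (xm i) (xp i), f x := fun i => by
    rw [← uIoc_of_le (hlt i)]
    exact (integral_sub_boundary_layers_le_of_near_wells hφ (fun _ => Real.sqrt_nonneg _) (hσ i)
      (hum i) (hup i)).trans (abs_integral_sqrt_comp_le_setIntegral hW hW0 hε hu hu' _ _)
  have hsum := Finset.sum_le_sum fun i (_ : i ∈ Finset.univ) => hpair i
  rw [Finset.sum_const, Finset.card_univ, nsmul_eq_mul] at hsum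
  obtain ⟨y, hy, hdisj_exc⟩ := exists_uIoc_disjoint_Ioc xm xp hfar
  have hyab : a ≤ y ∧ y ≤ b ∧ u y ∈ Ioo (-1 - ρ) (-1 + ρ) ∪ Ioo (1 - ρ) (1 + ρ) := by
    rcases hy with ⟨i, rfl⟩ | ⟨i, rfl⟩
    · exact ⟨hxm i, (hlt i).trans (hxp i), mem_wells_of_abs_sub_lt (hσ i) (hum i)⟩
    · refine ⟨(hxm i).trans (hlt i), hxp i, mem_wells_of_abs_sub_lt (σ := -σ i) ?_ ?_⟩
      · rcases hσ i with h | h <;> simp [h]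
      · rw [sub_neg_eq_add]
        exact hup i
  have hexc : sInf { e : ℝ | ∃ ξ₁ ∈ K, ∃ ξ₂ ∈ Ioo (-1 - ρ) (-1 + ρ) ∪ Ioo (1 - ρ) (1 + ρ),
      e = |∫ s in ξ₁..ξ₂, √(2 * W s)| } ≤ ∫ x in Ι x₀ y, f x := by
    refine le_trans (csInf_le ⟨0, ?_⟩ ⟨u x₀, hx₀K, u y, hyab.2.2, rfl⟩)
      (abs_integral_sqrt_comp_le_setIntegral hW hW0 hε hu hu' _ _)
    rintro e ⟨_, _, _, _, rfl⟩
    exact abs_nonneg _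
  rw [intervalIntegral.integral_of_le (hx₀.1.trans hx₀.2)]
  refine (add_le_add hexc hsum).trans (setIntegral_add_sum_le (fun i => measurableSet_Ioc) hdisj
    hdisj_exc (Ioc_subset_Ioc (le_min hx₀.1 hyab.1) (max_le hx₀.2 hyab.2.1))
    (fun i => Ioc_subset_Ioc (hxm i) (hxp i)) (by fun_prop : Continuous f).integrableOn_Ioc
    (ae_of_all _ hf0))

lemma step_eq_across_jump {N : ℕ} {a b r : ℝ} {h : Fin N → ℝ} (hmono : Monotone h)
    (hsep : ∀ i j : Fin N, i < j → h i + 2 * r ≤ h j) {v : ℝ → ℝ} {cval : Fin (N + 1) → ℝ}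
    (hv : ∀ i : Fin (N + 1), ∀ x : ℝ, a < x → x < b →
      (∀ j : Fin N, (j : ℕ) < (i : ℕ) → h j < x) →
      (∀ j : Fin N, (i : ℕ) ≤ (j : ℕ) → x < h j) → v x = cval i)
    (i : Fin N) {x y : ℝ} (hax : a < x) (hx : x ∈ Ioo (h i - 2 * r) (h i))
    (hy : y ∈ Ioo (h i) (h i + 2 * r)) (hyb : y < b) :
    v x = cval i.castSucc ∧ v y = cval i.succ := by
  constructor
  · refine hv _ x hax (by linarith [hx.2, hy.1, hy.2]) (fun j hj => ?_) (fun j hj => ?_)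
    · linarith [hsep j i (Fin.lt_def.2 hj), hx.1]
    · linarith [hmono (Fin.le_def.2 hj : i ≤ j), hx.2]
  · refine hv _ y (by linarith [hx.1, hx.2, hy.1]) hyb (fun j hj => ?_) (fun j hj => ?_)
    · have : j ≤ i := Fin.le_def.2 (by simp only [Fin.val_succ] at hj; omega)
      linarith [hmono this, hy.1]
    · have : i < j := Fin.lt_def.2 (by simp only [Fin.val_succ] at hj; omega)
      linarith [hsep i j this, hy.2]

theorem stmt19_general (a b r δ₁ ε ρ : ℝ) (hδr : δ₁ < r) (hε : 0 < ε)
    (N : ℕ) (hN : 0 < N)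
    (W : ℝ → ℝ) (hW : ContDiff ℝ 3 W)
    (hW1 : W 1 = 0) (hWm1 : W (-1) = 0)
    (hWpos : ∀ s : ℝ, s ≠ 1 → s ≠ -1 → 0 < W s)
    (c₀ : ℝ) (hc₀ : c₀ = ∫ s in (-1:ℝ)..1, Real.sqrt (2 * W s))
    -- the step function `v` with `N` jumps at `h 0 < h 1 < ⋯ < h (N-1)`
    (h : Fin N → ℝ) (hmono : StrictMono h)
    (hsep : ∀ i j : Fin N, i < j → h i + 2 * r ≤ h j)
    (hin : ∀ i : Fin N, a ≤ h i - r ∧ h i + r ≤ b)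
    (v : ℝ → ℝ)
    (cval : Fin (N + 1) → ℝ) (hcpm : ∀ i, cval i = 1 ∨ cval i = -1)
    (hjump : ∀ i : Fin N, cval i.castSucc ≠ cval i.succ)
    (hv : ∀ i : Fin (N + 1), ∀ x : ℝ, a < x → x < b →
      (∀ j : Fin N, (j : ℕ) < (i : ℕ) → h j < x) →
      (∀ j : Fin N, (i : ℕ) ≤ (j : ℕ) → x < h j) → v x = cval i)
    -- the closed set `K ⊆ ℝ ∖ {−1, 1}` and the parameter `ρ`
    (K : Set ℝ)
    (Γ : ℝ)
    (hΓ : Γ = 2 * N * max (∫ s in (1 - ρ)..1, Real.sqrt (2 * W s))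
        (∫ s in (-1:ℝ)..(-1 + ρ), Real.sqrt (2 * W s)))
    (hinf : 2 * Γ < sInf { e : ℝ | ∃ ξ₁ ∈ K,
        ∃ ξ₂ ∈ Set.Ioo (-1 - ρ) (-1 + ρ) ∪ Set.Ioo (1 - ρ) (1 + ρ),
        e = |∫ s in ξ₁..ξ₂, Real.sqrt (2 * W s)| })
    -- the profile `u` (continuous, with derivative `u'`)
    (u u' : ℝ → ℝ) (hu : ∀ x, HasDerivAt u (u' x) x) (hu' : Continuous u')
    (hpts : ∀ i : Fin N,
      (∃ xm ∈ Set.Ioo (h i - δ₁ / 2) (h i), |u xm - v xm| < ρ) ∧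
      (∃ xp ∈ Set.Ioo (h i) (h i + δ₁ / 2), |u xp - v xp| < ρ))
    (henergy : ∫ x in a..b, (ε / 2 * (u' x) ^ 2 + W (u x) / ε) ≤ N * c₀ + Γ) :
    ∀ x ∈ Set.Icc a b, u x ∈ K → ∃ i : Fin N, |x - h i| < δ₁ / 2 := by
  intro x₀ hx₀ hx₀K
  by_contra! hfar
  have hW0 : ∀ s, 0 ≤ W s := fun s => by
    by_cases h1 : s = 1
    · exact (h1 ▸ hW1).ge
    by_cases h2 : s = -1
    · exact (h2 ▸ hWm1).ge
    exact (hWpos s h1 h2).le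
  choose xm hxm hxmρ using fun i => (hpts i).1
  choose xp hxp hxpρ using fun i => (hpts i).2
  have hvals : ∀ i, v (xm i) = cval i.castSucc ∧ v (xp i) = cval i.succ := fun i =>
    step_eq_across_jump hmono.monotone hsep hv i (by linarith [(hin i).1, (hxm i).1, (hxm i).2])
      ⟨by linarith [(hxm i).1, (hxm i).2], (hxm i).2⟩ ⟨(hxp i).1, by linarith [(hxp i).1, (hxp i).2]⟩
      (by linarith [(hin i).2, (hxp i).1, (hxp i).2])
  have : Nonempty (Fin N) := Fin.pos_iff_nonempty.1 hN
  have hbound := sInf_add_card_mul_le_energy hW.continuous hW0 hε hu hu' hx₀ hx₀K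
    (σ := fun i => cval i.castSucc)
    (fun i => by linarith [(hin i).1, (hxm i).1, (hxm i).2])
    (fun i => by linarith [(hin i).2, (hxp i).1, (hxp i).2])
    (fun i => ((hxm i).2.trans (hxp i).1).le)
    ((pairwise_disjoint_on _).2 fun i j hij => Ioc_disjoint_Ioc_of_le
      (by linarith [hsep i j hij, (hxp i).1, (hxp i).2, (hxm j).1, (hxm j).2]))
    (fun i hi => (hfar i).not_gt
      (abs_sub_lt_iff.2 ⟨by linarith [hi.2, (hxp i).2], by linarith [hi.1, (hxm i).1]⟩))
    (fun i => hcpm _) (fun i => (hvals i).1 ▸ hxmρ i)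
    (fun i => by
      rw [← sub_neg_eq_add, ← eq_neg_of_ne_of_sign (hcpm _) (hcpm _) (hjump i), ← (hvals i).2]
      exact hxpρ i)
  rw [Fintype.card_fin, ← hc₀] at hbound
  set A := ∫ s in (-1)..(-1 + ρ), √(2 * W s)
  set B := ∫ s in (1 - ρ)..1, √(2 * W s)
  have hlayers : (N : ℝ) * (A + B) ≤ Γ := by
    rw [hΓ]
    nlinarith [le_max_left B A, le_max_right B A, N.cast_nonneg (α := ℝ)]
  linarith

/-- Interface-localization lemma: if the profile `u` comes `ρ`-close to the step
function `v` on both sides of each jump point and its energy exceeds `N c₀` by at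
most `Γ`, then every point where `u` takes values in the closed set
`K ⊆ ℝ ∖ {−1, 1}` lies within `δ₁/2` of some jump point `h i`. -/
theorem stmt19 (a b r δ₁ ε ρ : ℝ) (hab : a < b) (hr : 0 < r)
    (hδ₁ : 0 < δ₁) (hδr : δ₁ < r) (hε : 0 < ε) (hρ : 0 < ρ)
    (N : ℕ) (hN : 0 < N)
    (W : ℝ → ℝ) (hW : ContDiff ℝ 3 W)
    (hW1 : W 1 = 0) (hWm1 : W (-1) = 0) (hW1' : deriv W 1 = 0) (hWm1' : deriv W (-1) = 0)
    (hW1'' : 0 < iteratedDeriv 2 W 1) (hWm1'' : 0 < iteratedDeriv 2 W (-1))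
    (hWpos : ∀ s : ℝ, s ≠ 1 → s ≠ -1 → 0 < W s)
    (c₀ : ℝ) (hc₀ : c₀ = ∫ s in (-1:ℝ)..1, Real.sqrt (2 * W s))
    -- the step function `v` with `N` jumps at `h 0 < h 1 < ⋯ < h (N-1)`
    (h : Fin N → ℝ) (hmono : StrictMono h)
    (hsep : ∀ i j : Fin N, i < j → h i + 2 * r ≤ h j)
    (hin : ∀ i : Fin N, a ≤ h i - r ∧ h i + r ≤ b)
    (v : ℝ → ℝ) (hvpm : ∀ x, v x = 1 ∨ v x = -1)
    (cval : Fin (N + 1) → ℝ) (hcpm : ∀ i, cval i = 1 ∨ cval i = -1)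
    (hjump : ∀ i : Fin N, cval i.castSucc ≠ cval i.succ)
    (hv : ∀ i : Fin (N + 1), ∀ x : ℝ, a < x → x < b →
      (∀ j : Fin N, (j : ℕ) < (i : ℕ) → h j < x) →
      (∀ j : Fin N, (i : ℕ) ≤ (j : ℕ) → x < h j) → v x = cval i)
    -- the closed set `K ⊆ ℝ ∖ {−1, 1}` and the parameter `ρ`
    (K : Set ℝ) (hKclosed : IsClosed K) (hK : K ⊆ ({-1, 1} : Set ℝ)ᶜ)
    (hIρ : Set.Ioo (-1 - ρ) (-1 + ρ) ∪ Set.Ioo (1 - ρ) (1 + ρ) ⊆ Kᶜ)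
    (Γ : ℝ)
    (hΓ : Γ = 2 * N * max (∫ s in (1 - ρ)..1, Real.sqrt (2 * W s))
        (∫ s in (-1:ℝ)..(-1 + ρ), Real.sqrt (2 * W s)))
    (hinf : 2 * Γ < sInf { e : ℝ | ∃ ξ₁ ∈ K,
        ∃ ξ₂ ∈ Set.Ioo (-1 - ρ) (-1 + ρ) ∪ Set.Ioo (1 - ρ) (1 + ρ),
        e = |∫ s in ξ₁..ξ₂, Real.sqrt (2 * W s)| })
    -- the profile `u` (continuous, with derivative `u'`)
    (u u' : ℝ → ℝ) (hu : ∀ x, HasDerivAt u (u' x) x) (hu' : Continuous u')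
    (hpts : ∀ i : Fin N,
      (∃ xm ∈ Set.Ioo (h i - δ₁ / 2) (h i), |u xm - v xm| < ρ) ∧
      (∃ xp ∈ Set.Ioo (h i) (h i + δ₁ / 2), |u xp - v xp| < ρ))
    (henergy : ∫ x in a..b, (ε / 2 * (u' x) ^ 2 + W (u x) / ε) ≤ N * c₀ + Γ) :
    ∀ x ∈ Set.Icc a b, u x ∈ K → ∃ i : Fin N, |x - h i| < δ₁ / 2 :=
  stmt19_general a b r δ₁ ε ρ hδr hε N hN W hW hW1 hWm1 hWpos c₀ hc₀ h hmono hsep hin v cval hcpm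
    hjump hv K Γ hΓ hinf u u' hu hu' hpts henergy
end
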